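/- arXiv:1611.08585 — 9 statements merged into one kernel-verified Lean document; each statement's English description precedes it below -/
import Mathlib

section
/- Let J ≥ 5 and let n be an integer with n not divisible by 2^(J-1). Then there exist integers a and b with n = a + b, and integers i, j with 0 ≤ i, j ≤ J - 3, such that a ≡ 2^i (mod 2^(i+2)) and b ≡ 2^j (mod 2^(j+2)). -/
theorem stmt_0 (J : ℕ) (hJ : 5 ≤ J) (n : ℤ) (hn : ¬ ((2:ℤ)^(J-1) ∣ n)) :
    ∃ (a b : ℤ) (i j : ℕ), i ≤ J - 3 ∧ j ≤ J - 3 ∧ n = a + b ∧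
      (2:ℤ)^(i+2) ∣ (a - 2^i) ∧ (2:ℤ)^(j+2) ∣ (b - 2^j) := by
  have hn0 : n ≠ 0 := by rintro rfl; exact hn (dvd_zero _)
  have hna : n.natAbs ≠ 0 := by simpa using hn0
  obtain ⟨v, m, hm, hnm⟩ := Nat.exists_eq_pow_mul_and_not_dvd hna 2 (by norm_num)
  -- n = ± 2^v * m
  have hdvd : (2:ℤ)^v ∣ n := by
    have h1 : (((2:ℕ)^v : ℕ) : ℤ) ∣ (n.natAbs : ℤ) :=
      Int.natCast_dvd_natCast.mpr ⟨m, hnm⟩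
    rw [Int.dvd_natAbs] at h1
    exact_mod_cast h1
  obtain ⟨u, hu⟩ := hdvd
  have huodd : ¬ (2:ℤ) ∣ u := by
    intro ⟨k, hk⟩
    apply hm
    have h2 : (2:ℕ)^(v+1) ∣ n.natAbs := by
      have : (((2:ℕ)^(v+1) : ℕ) : ℤ) ∣ (n.natAbs : ℤ) := by
        rw [Int.dvd_natAbs]
        push_cast
        rw [hu, hk, pow_succ]
        exact ⟨k, by ring⟩
      exact_mod_cast this
    rw [hnm, pow_succ] at h2
    exact (Nat.mul_dvd_mul_iff_left (show 0 < 2^v by positivity)).mp h2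
  have hvle : v ≤ J - 2 := by
    by_contra h
    apply hn
    calc (2:ℤ)^(J-1) ∣ (2:ℤ)^v := pow_dvd_pow 2 (by omega)
      _ ∣ n := ⟨u, hu⟩
  rcases Nat.eq_zero_or_pos v with hv0 | hv1
  · -- n odd
    subst hv0
    have hodd : ¬ (2:ℤ) ∣ n := by rwa [hu, pow_zero, one_mul]
    have h4 : n % 4 = 1 ∨ n % 4 = 3 := by omega
    rcases h4 with h | h
    · exact ⟨n - 4, 4, 0, 2, by omega, by omega, by ring, by norm_num; omega,
        by norm_num⟩
    · exact ⟨n - 2, 2, 0, 1, by omega, by omega, by ring, by norm_num; omega,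
        by norm_num⟩
  · -- n even, v ≥ 1
    refine ⟨2^(v-1), n - 2^(v-1), v-1, v-1, by omega, by omega, by ring, by simp, ?_⟩
    have hv : v - 1 + 2 = v + 1 := by omega
    rw [hv]
    have : n - 2^(v-1) - 2^(v-1) = n - 2^v := by
      have : (2:ℤ)^v = 2^(v-1) * 2 := by rw [← pow_succ]; congr 1; omega
      rw [this]; ring
    rw [this, hu]
    obtain ⟨k, hk⟩ : (2:ℤ) ∣ u - 1 := by omega
    exact ⟨k, by rw [pow_succ]; linear_combination (2:ℤ)^v * hk⟩
end

section
/- Every integer s with s not divisible by 16 can be written as s = a' + b' where a' ≡ 2^i (mod 2^(i+2)) and b' ≡ 2^j (mod 2^(j+2)) for some integers 0 ≤ i, j ≤ 3. -/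
theorem stmt_3 (s : ℤ) (hs : ¬ ((16:ℤ) ∣ s)) :
    ∃ (a b : ℤ) (i j : ℕ), i ≤ 3 ∧ j ≤ 3 ∧ s = a + b ∧
      (2:ℤ)^(i+2) ∣ (a - 2^i) ∧ (2:ℤ)^(j+2) ∣ (b - 2^j) := by
  have h0 : s % 16 ≠ 0 := fun h => hs (Int.dvd_of_emod_eq_zero h)
  by_cases h1 : s % 4 = 1
  · exact ⟨s - 4, 4, 0, 2, by norm_num, by norm_num, by ring,
      by norm_num; omega, by norm_num⟩
  by_cases h2 : s % 4 = 3
  · exact ⟨s - 2, 2, 0, 1, by norm_num, by norm_num, by ring,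
      by norm_num; omega, by norm_num⟩
  by_cases h3 : s % 4 = 2
  · exact ⟨1, s - 1, 0, 0, by norm_num, by norm_num, by ring,
      by norm_num, by norm_num; omega⟩
  by_cases h4 : s % 8 = 4
  · exact ⟨2, s - 2, 1, 1, by norm_num, by norm_num, by ring,
      by norm_num, by norm_num; omega⟩
  · exact ⟨4, s - 4, 2, 2, by norm_num, by norm_num, by ring,
      by norm_num, by norm_num; omega⟩
end

section
/- If n is a positive integer all of whose prime divisors are congruent to 1 mod 4, then both n and 2n can be expressed in the form a² + b² with a and b coprime integers. -/
/-!
Every prime `p ≡ 1 (mod 4)` is a sum of two coprime squares (Fermat). If `m = a² + b²` and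
`p = c² + d²` are primitive representations, then `(ac ∓ bd)² + (ad ± bc)² = m p`, and at least one
of these two representations is again primitive: a common prime factor of either pair must be
`p`, and `p` dividing both pairs would force `p ∣ 2ac` and `p ∣ 2bc`, hence `p ∣ c` and `p ∣ d`.
Induction on the prime factors of `n` gives a primitive representation `n = a² + b²`; as `n` is
odd, so is `a + b`, and then `2n = (a + b)² + (a - b)²` is primitive as well.
-/

section PrincipalIdealRing

variable {R : Type*} [CommRing R] [IsDomain R] [IsPrincipalIdealRing R]

theorem isCoprime_of_squarefree_sq_add_sq {x y : R} (h : Squarefree (x ^ 2 + y ^ 2)) :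
    IsCoprime x y := by
  refine isCoprime_of_prime_dvd ?_ fun q hq hqx hqy => hq.not_isUnit (h q ?_)
  · rintro ⟨rfl, rfl⟩
    simp at h
  · rw [← sq]
    exact dvd_add (pow_dvd_pow_of_dvd hqx 2) (pow_dvd_pow_of_dvd hqy 2)

theorem Prime.isCoprime_or_dvd_and_dvd {p e f x y : R} (hp : Prime p) (h : x * e + y * f = p) :
    IsCoprime e f ∨ p ∣ e ∧ p ∣ f := by
  refine or_iff_not_imp_right.2 fun hpef => isCoprime_of_prime_dvd ?_ fun q hq hqe hqf => ?_
  · rintro ⟨rfl, rfl⟩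
    exact hp.ne_zero (by simpa using h.symm)
  · have hqp : q ∣ p := h ▸ dvd_add (hqe.mul_left x) (hqf.mul_left y)
    have hpq : p ∣ q := (hq.associated_of_dvd hp hqp).symm.dvd
    exact hpef ⟨hpq.trans hqe, hpq.trans hqf⟩

theorem IsCoprime.mul_sub_or_mul_add {a b c d : R} (hab : IsCoprime a b) (hcd : IsCoprime c d)
    (hp : Prime (c ^ 2 + d ^ 2)) (hp2 : IsCoprime (c ^ 2 + d ^ 2) 2) :
    IsCoprime (a * c - b * d) (a * d + b * c) ∨ IsCoprime (a * c + b * d) (a * d - b * c) := by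
  obtain ⟨u, v, huv⟩ := hab
  rcases hp.isCoprime_or_dvd_and_dvd (e := a * c - b * d) (f := a * d + b * c)
    (x := u * c - v * d) (y := u * d + v * c)
    (by linear_combination (c ^ 2 + d ^ 2) * huv) with h | ⟨he, hf⟩
  · exact .inl h
  rcases hp.isCoprime_or_dvd_and_dvd (e := a * c + b * d) (f := a * d - b * c)
    (x := u * c + v * d) (y := u * d - v * c)
    (by linear_combination (c ^ 2 + d ^ 2) * huv) with h | ⟨he', hf'⟩
  · exact .inr h
  have hac : c ^ 2 + d ^ 2 ∣ a * c :=
    hp2.dvd_of_dvd_mul_left ((dvd_add he he').trans (dvd_of_eq (by ring)))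
  have hbc : c ^ 2 + d ^ 2 ∣ b * c :=
    hp2.dvd_of_dvd_mul_left ((dvd_sub hf hf').trans (dvd_of_eq (by ring)))
  have hc : c ^ 2 + d ^ 2 ∣ c :=
    (dvd_add (hac.mul_left u) (hbc.mul_left v)).trans (dvd_of_eq (by linear_combination c * huv))
  have hd : c ^ 2 + d ^ 2 ∣ d :=
    hp.dvd_of_dvd_pow (n := 2) ((dvd_sub dvd_rfl (hc.pow two_ne_zero)).trans (dvd_of_eq (by ring)))
  exact (hp.not_isUnit (hcd.isUnit_of_dvd' hc hd)).elim

end PrincipalIdealRing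

theorem IsCoprime.add_sub {R : Type*} [CommRing R] {a b : R} (hab : IsCoprime a b)
    (h2 : IsCoprime (a + b) 2) : IsCoprime (a + b) (a - b) := by
  have ha : IsCoprime (a + b) a := by
    rw [add_comm]
    simpa using hab.symm.add_mul_left_left 1
  exact .of_add_mul_left_right (z := 1) (by convert h2.mul_right ha using 1; ring)

theorem Nat.Prime.exists_isCoprime_sq_add_sq {p : ℕ} (hp : p.Prime) (h : p % 4 ≠ 3) :
    ∃ c d : ℤ, IsCoprime c d ∧ (p : ℤ) = c ^ 2 + d ^ 2 := by
  have := Fact.mk hp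
  obtain ⟨c, d, hcd⟩ := Nat.Prime.sq_add_sq h
  have hcd' : (p : ℤ) = (c : ℤ) ^ 2 + (d : ℤ) ^ 2 := by exact_mod_cast hcd.symm
  refine ⟨c, d, isCoprime_of_squarefree_sq_add_sq ?_, hcd'⟩
  exact hcd' ▸ (Nat.prime_iff_prime_int.mp hp).squarefree

theorem Nat.exists_isCoprime_sq_add_sq {n : ℕ} (hn : n ≠ 0)
    (h : ∀ p : ℕ, p.Prime → p ∣ n → p % 4 = 1) :
    ∃ a b : ℤ, IsCoprime a b ∧ (n : ℤ) = a ^ 2 + b ^ 2 := by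
  induction n using UniqueFactorizationMonoid.induction_on_prime with
  | h₁ => exact absurd rfl hn
  | h₂ n hu => exact ⟨1, 0, isCoprime_one_left, by simp [Nat.isUnit_iff.mp hu]⟩
  | h₃ m p hm hp ih =>
    have hp' : p.Prime := Nat.prime_iff.mpr hp
    have hp4 : p % 4 = 1 := h p hp' (dvd_mul_right p m)
    obtain ⟨a, b, hab, habm⟩ := ih hm fun q hq hqm => h q hq (hqm.mul_left p)
    obtain ⟨c, d, hcd, hcdp⟩ := hp'.exists_isCoprime_sq_add_sq (by omega)
    have hprime : _root_.Prime (c ^ 2 + d ^ 2) := by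
      rw [← hcdp]
      exact Nat.prime_iff_prime_int.mp hp'
    have hodd : IsCoprime (c ^ 2 + d ^ 2) 2 := by
      rw [Int.isCoprime_two_right, ← hcdp, Int.odd_coe_nat, Nat.odd_iff]
      omega
    have hmul : ((p * m : ℕ) : ℤ) = (a ^ 2 + b ^ 2) * (c ^ 2 + d ^ 2) := by
      push_cast [habm, hcdp]
      ring
    rcases hab.mul_sub_or_mul_add hcd hprime hodd with h' | h'
    · exact ⟨_, _, h', by rw [hmul]; ring⟩
    · exact ⟨_, _, h', by rw [hmul]; ring⟩

theorem stmt_4 (n : ℕ) (hn : 1 ≤ n)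
    (h : ∀ p : ℕ, p.Prime → p ∣ n → p % 4 = 1) :
    (∃ a b : ℤ, IsCoprime a b ∧ (n : ℤ) = a^2 + b^2) ∧
    (∃ a b : ℤ, IsCoprime a b ∧ (2 * n : ℤ) = a^2 + b^2) := by
  obtain ⟨a, b, hab, habn⟩ := Nat.exists_isCoprime_sq_add_sq (by omega) h
  have hn_odd : Odd (n : ℤ) := by
    have : ¬ 2 ∣ n := fun h2 => by simpa using h 2 Nat.prime_two h2
    simpa [Int.odd_coe_nat, Nat.odd_iff, Nat.two_dvd_ne_zero] using this
  have hab_odd : Odd (a + b) := by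
    rw [habn] at hn_odd
    simpa [parity_simps] using hn_odd
  refine ⟨⟨a, b, hab, habn⟩, a + b, a - b, hab.add_sub (Int.isCoprime_two_right.mpr hab_odd), ?_⟩
  rw [habn]
  ring
end

section
/- Let ε > 0 be sufficiently small and let ρ = 1/2 - ε. Define D⁺ to be the set of squarefree integers d = p₁ ⋯ p_r ≤ x^ρ with primes z ≥ p₁ > p₂ > ⋯ > p_r (for some z ≤ x^(1/2)) satisfying p₁ ⋯ p_{2k-2} · p_{2k-1}³ ≤ x^ρ for all k ≥ 1. Then for any D with x^(1/5) ≤ D ≤ x^ρ, every d ∈ D⁺ can be written as d = d₁ d₂ with positive integers d₁, d₂ such that d₁ ≤ D, d₁ d₂² ≤ x^(1-2ε²)/D, and moreover either d₁ ≥ x^(0.1) or d₂ = 1. -/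
/-!
Write `M = x^ρ`, `s = x^0.1` and `d = p₁ ⋯ p_r`. The cube conditions give
`p₁ ⋯ p_i · p_i ≤ M` for every `i`, and `p ≤ M^(1/3) ≤ D` for every prime factor `p`.
If `d ≤ D` take `d₁ = d`. If `d D ≥ M s`, run through the primes in decreasing order, putting
each into `d₂` as long as `d₂` stays below `Y = min (M² / (d D), d / s)`; when `p` is
rejected, `Y < d₂ p`, so the prefix bound gives `d₁ p · Y ≤ M`, and hence `d₁ ≤ M / Y ≤ D`.
If `d D < M s`, then `d² D < M²` and any divisor `d₁ ∈ [s, D]` works: a shortest tail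
`p_j ⋯ p_r` exceeding `D` yields either its proper tail or the prime `p_j`.
-/

/-- The conditions `p₁ ⋯ p_{2k-2} · p_{2k-1}³ ≤ M` for `L = [p₁, …, p_r]`, indexed from `0`. -/
def CubeCondition (L : List ℕ) (M : ℝ) : Prop :=
  ∀ k : ℕ, 2 * k < L.length →
    ((L.take (2 * k)).prod : ℝ) * ((L.getD (2 * k) 1 : ℕ) : ℝ) ^ 3 ≤ M

def PrefixCondition (L : List ℕ) (M : ℝ) : Prop :=
  ∀ i (hi : i < L.length), (((L.take (i + 1)).prod * L[i] : ℕ) : ℝ) ≤ M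

theorem List.prod_take_succ_mul_getElem_le {L : List ℕ} (hL : L.Pairwise (· ≥ ·)) {i : ℕ}
    (hi : i < L.length) :
    (L.take (i + 1)).prod * L[i] ≤ (L.take (2 * (i / 2))).prod * L[2 * (i / 2)] ^ 3 := by
  rcases Nat.even_or_odd' i with ⟨k, rfl | rfl⟩
  · have hk : 2 * k / 2 = k := by omega
    simp only [hk, List.prod_take_succ L _ hi, mul_assoc]
    gcongr
    rcases Nat.eq_zero_or_pos L[2 * k] with h0 | h0
    · simp [h0]
    · rw [← sq]; exact Nat.pow_le_pow_right h0 (by norm_num)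
  · have hk : (2 * k + 1) / 2 = k := by omega
    have hj : 2 * k < L.length := by omega
    have hle : L[2 * k + 1] ≤ L[2 * k] := List.pairwise_iff_getElem.mp hL _ _ hj hi (by omega)
    simp only [hk]
    rw [List.prod_take_succ L _ hi, List.prod_take_succ L _ hj]
    calc (L.take (2 * k)).prod * L[2 * k] * L[2 * k + 1] * L[2 * k + 1]
        ≤ (L.take (2 * k)).prod * L[2 * k] * L[2 * k] * L[2 * k] := by gcongr
      _ = _ := by ring

theorem PrefixCondition.of_cubeCondition {L : List ℕ} {M : ℝ} (hL : L.Pairwise (· ≥ ·))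
    (hcube : CubeCondition L M) : PrefixCondition L M := by
  intro i hi
  have hk : 2 * (i / 2) < L.length := by omega
  calc (((L.take (i + 1)).prod * L[i] : ℕ) : ℝ)
      ≤ (((L.take (2 * (i / 2))).prod * L[2 * (i / 2)] ^ 3 : ℕ) : ℝ) := by
        exact_mod_cast L.prod_take_succ_mul_getElem_le hL hi
    _ ≤ M := by
        have := hcube _ hk
        rw [List.getD_eq_getElem _ _ hk] at this
        exact_mod_cast this

theorem CubeCondition.pow_three_le_of_mem {L : List ℕ} {M : ℝ} (hL : L.Pairwise (· ≥ ·))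
    (hcube : CubeCondition L M) {p : ℕ} (hp : p ∈ L) : (p : ℝ) ^ 3 ≤ M := by
  have h0 : 0 < L.length := List.length_pos_of_mem hp
  have hhead : (L[0] : ℝ) ^ 3 ≤ M := by
    have := hcube 0 (by simpa using h0)
    rwa [List.getD_eq_getElem _ _ h0, List.take_zero, List.prod_nil, Nat.cast_one, one_mul] at this
  have hle : p ≤ L[0] := by simpa [List.head_eq_getElem] using hL.rel_head hp
  exact (pow_le_pow_left₀ (Nat.cast_nonneg _) (by exact_mod_cast hle) 3).trans hhead

theorem PrefixCondition.exists_mul_eq_prod {L : List ℕ} {M : ℝ} (hL : PrefixCondition L M)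
    {Y : ℝ} (hY : 1 ≤ Y) :
    ∃ a b : ℕ, a * b = L.prod ∧ (b : ℝ) ≤ Y ∧ (a = 1 ∨ a * Y ≤ M) := by
  induction L using List.reverseRecOn with
  | nil => exact ⟨1, 1, rfl, by simpa using hY, Or.inl rfl⟩
  | append_singleton L p ih =>
    obtain ⟨a, b, hab, hbY, ha⟩ := ih fun i hi => by
      have := hL i (by simp; omega)
      rwa [List.take_append_of_le_length (by omega), List.getElem_append_left hi] at this
    have hlast : ((L.prod * p * p : ℕ) : ℝ) ≤ M := by simpa using hL L.length (by simp)
    have hprod : (L ++ [p]).prod = a * b * p := by simp [hab]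
    by_cases hfit : ((b * p : ℕ) : ℝ) ≤ Y
    · exact ⟨a, b * p, by rw [hprod]; ring, hfit, ha⟩
    · refine ⟨a * p, b, by rw [hprod]; ring, hbY, Or.inr ?_⟩
      calc ((a * p : ℕ) : ℝ) * Y ≤ (a * p : ℕ) * (b * p : ℕ) := by gcongr; exact (not_le.mp hfit).le
        _ = ((L.prod * p * p : ℕ) : ℝ) := by rw [← hab]; push_cast; ring
        _ ≤ M := hlast

theorem List.exists_eq_append_cons_prod_le_lt_mul {D : ℝ} (hD : 1 ≤ D) (L : List ℕ)
    (hL : D < L.prod) :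
    ∃ (l₁ : List ℕ) (p : ℕ) (l₂ : List ℕ), L = l₁ ++ p :: l₂ ∧ (l₂.prod : ℝ) ≤ D ∧
      D < p * l₂.prod := by
  induction L with
  | nil => simp at hL; linarith
  | cons q L ih =>
    by_cases h : (L.prod : ℝ) ≤ D
    · exact ⟨[], q, L, rfl, h, by simpa using hL⟩
    · obtain ⟨l₁, p, l₂, rfl, h₁, h₂⟩ := ih (not_le.mp h)
      exact ⟨q :: l₁, p, l₂, rfl, h₁, h₂⟩

section Factorization

variable {L : List ℕ} {M D s : ℝ}

theorem exists_factorization_of_mul_le_prod_mul (hprefix : PrefixCondition L M)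
    (hdM : (L.prod : ℝ) ≤ M) (hDM : D ≤ M) (hD : 1 ≤ D) (hs : 0 < s) (hsd : s ≤ L.prod)
    (hlarge : M * s ≤ L.prod * D) :
    ∃ d₁ d₂ : ℕ, L.prod = d₁ * d₂ ∧ (d₁ : ℝ) ≤ D ∧ (d₁ : ℝ) * d₂ ^ 2 ≤ M * M / D ∧ s ≤ d₁ := by
  set d := L.prod
  have hd : (0 : ℝ) < d := by linarith
  have hD0 : (0 : ℝ) < D := by linarith
  have hM : 0 < M := by linarith
  set Y := min (M * M / (d * D)) (d / s)
  have hY : 1 ≤ Y := by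
    refine le_min ?_ ?_
    · rw [one_le_div (by positivity)]; exact mul_le_mul hdM hDM hD0.le hM.le
    · rwa [one_le_div (by linarith)]
  have hMY : M / D ≤ Y := by
    refine le_min ?_ ?_
    · rw [div_le_div_iff₀ hD0 (by positivity)]
      nlinarith [mul_le_mul_of_nonneg_left hdM (mul_pos hM hD0).le]
    · rwa [div_le_div_iff₀ hD0 (by linarith)]
  obtain ⟨a, b, hab, hbY, ha⟩ := hprefix.exists_mul_eq_prod hY
  have habR : (a : ℝ) * b = d := by exact_mod_cast hab
  have hb : (0 : ℝ) < b := by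
    rcases Nat.eq_zero_or_pos b with rfl | h
    · simp at habR; linarith
    · exact_mod_cast h
  have hsa : s ≤ a := by
    have : b * s ≤ d := (le_div_iff₀ (by linarith)).mp (hbY.trans (min_le_right _ _))
    nlinarith
  refine ⟨a, b, hab.symm, ?_, ?_, hsa⟩
  · rcases ha with rfl | ha
    · simpa using hD
    · have : a * (M / D) ≤ M := (mul_le_mul_of_nonneg_left hMY (Nat.cast_nonneg a)).trans ha
      rw [mul_div_assoc', div_le_iff₀ hD0] at this
      nlinarith
  · have : b * (d * D) ≤ M * M := (le_div_iff₀ (by positivity)).mp (hbY.trans (min_le_left _ _))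
    rw [le_div_iff₀ hD0]
    nlinarith

theorem exists_factorization_of_prod_mul_lt
    (hpD : ∀ p ∈ L, (p : ℝ) ≤ D) (hs : 1 ≤ s) (hsD : s * s ≤ D) (hDd : D < L.prod)
    (hsmall : L.prod * D < M * s) :
    ∃ d₁ d₂ : ℕ, L.prod = d₁ * d₂ ∧ (d₁ : ℝ) ≤ D ∧ (d₁ : ℝ) * d₂ ^ 2 ≤ M * M / D ∧ s ≤ d₁ := by
  set d := L.prod
  have hD0 : (0 : ℝ) < D := by nlinarith
  have hds : d * s < M := by nlinarith [mul_le_mul_of_nonneg_left hsD (Nat.cast_nonneg (α := ℝ) d)]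
  have hd2 : d * d * D ≤ M * M := by
    have : d * s * (d * D) ≤ M * (M * s) :=
      mul_le_mul hds.le hsmall.le (by positivity) (by nlinarith)
    nlinarith
  have hsplit : ∀ d₁ d₂ : ℕ, d = d₁ * d₂ → s ≤ d₁ → (d₁ : ℝ) * d₂ ^ 2 ≤ M * M / D := by
    intro d₁ d₂ h hs₁
    have h' : (d : ℝ) = d₁ * d₂ := by exact_mod_cast h
    rw [le_div_iff₀ hD0]
    have : (d₂ : ℝ) ≤ d := by rw [h']; nlinarith [Nat.cast_nonneg (α := ℝ) d₂]
    calc (d₁ : ℝ) * d₂ ^ 2 * D = d * d₂ * D := by rw [h']; ring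
      _ ≤ d * d * D := by gcongr
      _ ≤ M * M := hd2
  obtain ⟨l₁, p, l₂, hL, hl₂D, hDp⟩ := L.exists_eq_append_cons_prod_le_lt_mul (by nlinarith) hDd
  have hd : d = l₁.prod * (p * l₂.prod) := by simp [d, hL]
  by_cases hsl₂ : s ≤ l₂.prod
  · exact ⟨l₂.prod, l₁.prod * p, by rw [hd]; ring, hl₂D, hsplit _ _ (by rw [hd]; ring) hsl₂, hsl₂⟩
  · have hsp : s ≤ p := by nlinarith [Nat.cast_nonneg (α := ℝ) p]
    exact ⟨p, l₁.prod * l₂.prod, by rw [hd]; ring, hpD p (by simp [hL]),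
      hsplit _ _ (by rw [hd]; ring) hsp, hsp⟩

theorem exists_factorization (hprefix : PrefixCondition L M) (hpD : ∀ p ∈ L, (p : ℝ) ≤ D)
    (hdM : (L.prod : ℝ) ≤ M) (hDM : D ≤ M) (hs : 1 ≤ s) (hsD : s * s ≤ D) :
    ∃ d₁ d₂ : ℕ, L.prod = d₁ * d₂ ∧ (d₁ : ℝ) ≤ D ∧ (d₁ : ℝ) * d₂ ^ 2 ≤ M * M / D ∧
      (s ≤ d₁ ∨ d₂ = 1) := by
  have hD : 1 ≤ D := by nlinarith
  rcases le_or_gt (L.prod : ℝ) D with hdD | hDd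
  · refine ⟨L.prod, 1, (mul_one _).symm, hdD, ?_, Or.inr rfl⟩
    rw [le_div_iff₀ (by linarith)]
    simpa using mul_le_mul hdM hDM (by linarith) (by linarith)
  rcases le_or_gt (M * s) (L.prod * D) with hlarge | hsmall
  · obtain ⟨d₁, d₂, h⟩ := exists_factorization_of_mul_le_prod_mul hprefix hdM hDM hD
      (by linarith) (by nlinarith) hlarge
    exact ⟨d₁, d₂, h.1, h.2.1, h.2.2.1, Or.inl h.2.2.2⟩
  · obtain ⟨d₁, d₂, h⟩ := exists_factorization_of_prod_mul_lt hpD hs hsD hDd hsmall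
    exact ⟨d₁, d₂, h.1, h.2.1, h.2.2.1, Or.inl h.2.2.2⟩

end Factorization

/-- Factorization of the support of the upper-bound linear sieve weights
(Lemma on linear sieve weights, case θ = 0, ρ = 1/2 - ε). The squarefree
integer `d = p₁ ⋯ p_r` is encoded by the strictly decreasing list `L` of its
prime factors. -/
theorem stmt_7 (ε : ℝ) (hε : 0 < ε) (hε' : ε < 1/100) :
    ∃ x₀ : ℝ, ∀ x : ℝ, x₀ ≤ x → ∀ z : ℝ, z ≤ x ^ ((1:ℝ)/2) →
    ∀ L : List ℕ, L ≠ [] → L.Chain' (· > ·) →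
      (∀ p ∈ L, Nat.Prime p ∧ (p:ℝ) ≤ z) →
      ((L.prod : ℝ) ≤ x ^ ((1:ℝ)/2 - ε)) →
      (∀ k : ℕ, 2*k < L.length →
        ((L.take (2*k)).prod : ℝ) * ((L.getD (2*k) 1 : ℕ) : ℝ)^3 ≤ x ^ ((1:ℝ)/2 - ε)) →
    ∀ D : ℝ, x ^ ((1:ℝ)/5) ≤ D → D ≤ x ^ ((1:ℝ)/2 - ε) →
    ∃ d₁ d₂ : ℕ, 0 < d₁ ∧ 0 < d₂ ∧ L.prod = d₁ * d₂ ∧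
      (d₁ : ℝ) ≤ D ∧ (d₁ : ℝ) * (d₂ : ℝ)^2 ≤ x ^ (1 - 2*ε^2) / D ∧
      (x ^ (0.1:ℝ) ≤ (d₁ : ℝ) ∨ d₂ = 1) := by
  refine ⟨1, fun x hx z _ L _ hchain hprime hdM hcube D hD₁ hD₂ => ?_⟩
  set M := x ^ ((1:ℝ)/2 - ε)
  have hanti : L.Pairwise (· ≥ ·) := (List.isChain_iff_pairwise.mp hchain).imp le_of_lt
  have hD : 0 ≤ D := (Real.rpow_nonneg (by linarith) _).trans hD₁
  have hss : x ^ (0.1:ℝ) * x ^ (0.1:ℝ) = x ^ ((1:ℝ)/5) := by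
    rw [← Real.rpow_add (by linarith)]; norm_num
  have hMD : M ≤ D ^ 3 := calc
    M ≤ x ^ ((1:ℝ)/5 * (3:ℕ)) := Real.rpow_le_rpow_of_exponent_le hx (by push_cast; linarith)
    _ = (x ^ ((1:ℝ)/5)) ^ 3 := Real.rpow_mul_natCast (by linarith) _ _
    _ ≤ D ^ 3 := by gcongr
  have hpD : ∀ p ∈ L, (p : ℝ) ≤ D := fun p hp => le_of_pow_le_pow_left₀ three_ne_zero hD
    ((CubeCondition.pow_three_le_of_mem hanti hcube hp).trans hMD)
  have hMM : M * M ≤ x ^ (1 - 2*ε^2) := by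
    rw [← Real.rpow_add (by linarith)]
    exact Real.rpow_le_rpow_of_exponent_le hx (by nlinarith)
  obtain ⟨d₁, d₂, hd, hd₁D, hd₁d₂, hs⟩ := exists_factorization
    (PrefixCondition.of_cubeCondition hanti hcube) hpD hdM hD₂
    (Real.one_le_rpow hx (by norm_num)) (hss.trans_le hD₁)
  have hd₀ : 0 < d₁ * d₂ := hd ▸ List.prod_pos fun p hp => (hprime p hp).1.pos
  exact ⟨d₁, d₂, Nat.pos_of_mul_pos_right hd₀, Nat.pos_of_mul_pos_left hd₀, hd, hd₁D,
    hd₁d₂.trans (by gcongr), hs⟩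
end

section
/- Let ε > 0 be sufficiently small and let ρ = 3/7 - ε. Define D⁻ to be the set of squarefree integers d = p₁ ⋯ p_r ≤ x^ρ with primes z ≥ p₁ > p₂ > ⋯ > p_r (for some z ≤ x^(1/3 - 2ε²)) satisfying p₁ ⋯ p_{2k-1} · p_{2k}² ≤ x^ρ for all k ≥ 1. Then for any D with x^(1/3 - 2ε²) ≤ D ≤ x^ρ, every d ∈ D⁻ can be written as d = d₁ d₂ with positive integers d₁, d₂ such that d₁ ≤ D, d₁ d₂² ≤ x^(1 - 2ε²)/D, and moreover either d₁ ≥ x^(0.1) or d₂ = 1. -/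
set_option maxHeartbeats 1000000 in
/-- Factorization of the support of the lower-bound semilinear sieve weights
(case θ = 0, ρ = 3/7 - ε). The squarefree integer `d = p₁ ⋯ p_r` is encoded by
the strictly decreasing list `L` of its prime factors. -/
theorem stmt_8 (ε : ℝ) (hε : 0 < ε) (hε' : ε < 1/100) :
    ∃ x₀ : ℝ, ∀ x : ℝ, x₀ ≤ x → ∀ z : ℝ, z ≤ x ^ ((1:ℝ)/3 - 2*ε^2) →
    ∀ L : List ℕ, L ≠ [] → L.Chain' (· > ·) →
      (∀ p ∈ L, Nat.Prime p ∧ (p:ℝ) ≤ z) →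
      ((L.prod : ℝ) ≤ x ^ ((3:ℝ)/7 - ε)) →
      (∀ k : ℕ, 2*k+1 < L.length →
        ((L.take (2*k+1)).prod : ℝ) * ((L.getD (2*k+1) 1 : ℕ) : ℝ)^2 ≤ x ^ ((3:ℝ)/7 - ε)) →
    ∀ D : ℝ, x ^ ((1:ℝ)/3 - 2*ε^2) ≤ D → D ≤ x ^ ((3:ℝ)/7 - ε) →
    ∃ d₁ d₂ : ℕ, 0 < d₁ ∧ 0 < d₂ ∧ L.prod = d₁ * d₂ ∧
      (d₁ : ℝ) ≤ D ∧ (d₁ : ℝ) * (d₂ : ℝ)^2 ≤ x ^ (1 - 2*ε^2) / D ∧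
      (x ^ (0.1:ℝ) ≤ (d₁ : ℝ) ∨ d₂ = 1) := by
  classical
  refine ⟨1, ?_⟩
  intro x hx z hz L hL0 hchain hLp hLprod hL2k D hDlo hDhi
  have hx0 : (0:ℝ) < x := lt_of_lt_of_le one_pos hx
  have hxpow : ∀ a b : ℝ, a ≤ b → x ^ a ≤ x ^ b := fun a b h =>
    Real.rpow_le_rpow_of_exponent_le hx h
  have hxpos : ∀ a : ℝ, (0:ℝ) < x ^ a := fun a => Real.rpow_pos_of_pos hx0 a
  have h1le : (1:ℝ) ≤ x ^ ((1:ℝ)/3 - 2*ε^2) := by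
    have h := hxpow 0 ((1:ℝ)/3 - 2*ε^2) (by nlinarith)
    rwa [Real.rpow_zero] at h
  have hD0 : (0:ℝ) < D := lt_of_lt_of_le one_pos (le_trans h1le hDlo)
  have hrpos : 0 < L.length := List.length_pos_iff.mpr hL0
  have hpw : L.Pairwise (· > ·) := List.isChain_iff_pairwise.mp hchain
  have hget := List.pairwise_iff_getElem.mp hpw
  have h2le : ∀ p ∈ L, 1 ≤ p := fun p hp => (hLp p hp).1.one_lt.le
  have htakepos : ∀ n, 0 < (L.take n).prod := fun n =>
    List.prod_pos (fun a ha => lt_of_lt_of_le one_pos (h2le a (List.take_subset n L ha)))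
  set P : ℕ → Prop := fun m => ((L.take m).prod : ℝ) ≤ D with hPdef
  set j := Nat.findGreatest P L.length with hjdef
  have hP0 : P 0 := by
    show ((L.take 0).prod : ℝ) ≤ D
    simpa using le_trans h1le hDlo
  have hjle : j ≤ L.length := Nat.findGreatest_le _
  have hPj : P j := Nat.findGreatest_spec (Nat.zero_le _) hP0
  have hd1D : ((L.take j).prod : ℝ) ≤ D := hPj
  rcases eq_or_lt_of_le hjle with hjr | hjr
  · -- the whole product is at most D : take d₂ = 1
    refine ⟨L.prod, 1, List.prod_pos (fun a ha => lt_of_lt_of_le one_pos (h2le a ha)),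
      one_pos, by ring, ?_, ?_, Or.inr rfl⟩
    · have h := hd1D
      rwa [hjr, List.take_length] at h
    · rw [le_div_iff₀ hD0, Nat.cast_one]
      have h1 : (L.prod : ℝ) * D ≤ x ^ ((3:ℝ)/7 - ε) * x ^ ((3:ℝ)/7 - ε) :=
        mul_le_mul hLprod hDhi hD0.le (hxpos _).le
      calc (L.prod : ℝ) * (1:ℝ)^2 * D = (L.prod : ℝ) * D := by ring
        _ ≤ x ^ ((3:ℝ)/7 - ε) * x ^ ((3:ℝ)/7 - ε) := h1
        _ = x ^ (((3:ℝ)/7 - ε) + ((3:ℝ)/7 - ε)) := (Real.rpow_add hx0 _ _).symm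
        _ ≤ x ^ (1 - 2*ε^2) := hxpow _ _ (by nlinarith)
  · -- j < L.length
    have hj1 : 1 ≤ j := by
      apply Nat.le_findGreatest hrpos
      show ((L.take 1).prod : ℝ) ≤ D
      have h1 : (L.take 1).prod = L[0] := by
        rw [List.prod_take_succ L 0 hrpos]; simp
      rw [h1]
      exact le_trans (le_trans (hLp _ (List.getElem_mem hrpos)).2 hz) hDlo
    have hnotP : ¬ P (j+1) := Nat.findGreatest_is_greatest (Nat.lt_succ_self j) hjr
    have hgetD : L.getD j 1 = L[j] := List.getD_eq_getElem L 1 hjr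
    have hDlt : D < ((L.take j).prod : ℝ) * (L[j] : ℝ) := by
      have heq : (L.take (j+1)).prod = (L.take j).prod * L[j] := List.prod_take_succ L j hjr
      have h2 : ¬ (((L.take (j+1)).prod : ℝ) ≤ D) := hnotP
      push_neg at h2
      calc D < ((L.take (j+1)).prod : ℝ) := h2
        _ = ((L.take j).prod : ℝ) * (L[j] : ℝ) := by rw [heq]; push_cast; ring
    have hL0mem : L[0] ∈ L.take j := by
      have h0 : 0 < (L.take j).length := by
        rw [List.length_take]; omega
      have h := List.getElem_mem h0
      rwa [List.getElem_take] at h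
    have hd1ge : L[0] ≤ (L.take j).prod :=
      List.single_le_prod (fun a ha => h2le a (List.take_subset _ _ ha)) _ hL0mem
    have hqlt0 : L[j] < L[0] := hget 0 j hrpos hjr (by omega)
    have hd2pos : 0 < (L.drop j).prod :=
      List.prod_pos (fun a ha => lt_of_lt_of_le one_pos (h2le a (List.drop_subset _ _ ha)))
    have hqpos : 0 < L[j] := lt_of_lt_of_le one_pos (h2le _ (List.getElem_mem hjr))
    have hd1pos : (0:ℝ) < ((L.take j).prod : ℝ) := by exact_mod_cast htakepos j
    have hd2r : (0:ℝ) < ((L.drop j).prod : ℝ) := by exact_mod_cast hd2pos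
    have hqr : (0:ℝ) < (L[j] : ℝ) := by exact_mod_cast hqpos
    have hqled1 : ((L[j] : ℕ) : ℝ) ≤ ((L.take j).prod : ℝ) := by
      exact_mod_cast le_trans hqlt0.le hd1ge
    have hpow01 : x ^ (0.1:ℝ) ≤ ((L.take j).prod : ℝ) := by
      have h1 : (x ^ (0.1:ℝ))^2 = x ^ (0.2:ℝ) := by
        rw [sq, ← Real.rpow_add hx0]; norm_num
      have h2 : x ^ (0.2:ℝ) ≤ D := le_trans (hxpow _ _ (by nlinarith)) hDlo
      have hsq : (x ^ (0.1:ℝ))^2 < ((L.take j).prod : ℝ)^2 := by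
        rw [h1, sq]
        nlinarith [hDlt, hqled1, hd1pos, hqr]
      exact (lt_of_pow_lt_pow_left₀ 2 hd1pos.le hsq).le
    have hsplit : (L.take j).prod * (L.drop j).prod = L.prod := List.prod_take_mul_prod_drop L j
    have hdd : ((L.take j).prod : ℝ) * ((L.drop j).prod : ℝ) ≤ x ^ ((3:ℝ)/7 - ε) := by
      rw [← Nat.cast_mul, hsplit]; exact hLprod
    have hddnn : (0:ℝ) ≤ ((L.take j).prod : ℝ) * ((L.drop j).prod : ℝ) :=
      (mul_pos hd1pos hd2r).le
    have key : D * (((L.take j).prod : ℝ) * ((L.drop j).prod : ℝ)^2)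
        ≤ (((L.take j).prod : ℝ) * ((L.drop j).prod : ℝ))^2 * (L[j] : ℝ) := by
      calc D * (((L.take j).prod : ℝ) * ((L.drop j).prod : ℝ)^2)
          ≤ (((L.take j).prod : ℝ) * (L[j] : ℝ)) *
              (((L.take j).prod : ℝ) * ((L.drop j).prod : ℝ)^2) :=
            mul_le_mul_of_nonneg_right hDlt.le (by positivity)
        _ = (((L.take j).prod : ℝ) * ((L.drop j).prod : ℝ))^2 * (L[j] : ℝ) := by ring
    refine ⟨(L.take j).prod, (L.drop j).prod, htakepos j, hd2pos, hsplit.symm, hd1D, ?_,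
      Or.inl hpow01⟩
    rw [le_div_iff₀ hD0]
    rcases Nat.even_or_odd j with he | ho
    · -- j even, j = k + k with k ≥ 1
      obtain ⟨k, hk⟩ := he
      have hjm1 : j - 1 < L.length := by omega
      have hH := hL2k (k-1) (by omega)
      rw [show 2*(k-1)+1 = j-1 by omega, List.getD_eq_getElem L 1 hjm1] at hH
      have hsucc : (L.take j).prod = (L.take (j-1)).prod * L[j-1] := by
        have h := List.prod_take_succ L (j-1) hjm1
        rwa [show j - 1 + 1 = j by omega] at h
      have hd1p : ((L.take j).prod : ℝ) * (L[j-1] : ℝ) ≤ x ^ ((3:ℝ)/7 - ε) := by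
        rw [hsucc, Nat.cast_mul, mul_assoc, ← sq]; exact hH
      have hppos : (0:ℝ) < (L[j-1] : ℝ) := by
        exact_mod_cast lt_of_lt_of_le one_pos (h2le _ (List.getElem_mem hjm1))
      have h0m : L[0] ∈ L.take (j-1) := by
        have h0 : 0 < (L.take (j-1)).length := by rw [List.length_take]; omega
        have h := List.getElem_mem h0
        rwa [List.getElem_take] at h
      have htp : L[0] ≤ (L.take (j-1)).prod :=
        List.single_le_prod (fun a ha => h2le a (List.take_subset _ _ ha)) _ h0m
      have hplt : L[j-1] < L[0] := hget 0 (j-1) hrpos hjm1 (by omega)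
      have hd1gep2 : (L[j-1] : ℝ) * (L[j-1] : ℝ) ≤ ((L.take j).prod : ℝ) := by
        have h : L[j-1] * L[j-1] ≤ (L.take j).prod := by
          rw [hsucc]
          exact Nat.mul_le_mul (le_trans hplt.le htp) le_rfl
        exact_mod_cast h
      have hp3 : (L[j-1] : ℝ) ≤ x ^ (((3:ℝ)/7 - ε)/3) := by
        apply le_of_pow_le_pow_left₀ (n := 3) (by norm_num) (hxpos _).le
        have h3 : (x ^ (((3:ℝ)/7 - ε)/3))^3 = x ^ ((3:ℝ)/7 - ε) := by
          rw [← Real.rpow_natCast (x ^ (((3:ℝ)/7 - ε)/3)) 3, ← Real.rpow_mul hx0.le]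
          norm_num
        rw [h3]
        calc (L[j-1] : ℝ)^3 = ((L[j-1] : ℝ) * (L[j-1] : ℝ)) * (L[j-1] : ℝ) := by ring
          _ ≤ ((L.take j).prod : ℝ) * (L[j-1] : ℝ) :=
            mul_le_mul_of_nonneg_right hd1gep2 hppos.le
          _ ≤ x ^ ((3:ℝ)/7 - ε) := hd1p
      have hqltp : (L[j] : ℝ) ≤ (L[j-1] : ℝ) := by
        exact_mod_cast (hget (j-1) j hjm1 hjr (by omega)).le
      calc ((L.take j).prod : ℝ) * ((L.drop j).prod : ℝ)^2 * D
          = D * (((L.take j).prod : ℝ) * ((L.drop j).prod : ℝ)^2) := by ring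
        _ ≤ (((L.take j).prod : ℝ) * ((L.drop j).prod : ℝ))^2 * (L[j] : ℝ) := key
        _ ≤ (x ^ ((3:ℝ)/7 - ε))^2 * x ^ (((3:ℝ)/7 - ε)/3) :=
            mul_le_mul (pow_le_pow_left₀ hddnn hdd 2) (le_trans hqltp hp3) hqr.le
              (by positivity)
        _ = x ^ (((3:ℝ)/7 - ε) + ((3:ℝ)/7 - ε) + ((3:ℝ)/7 - ε)/3) := by
            rw [sq, ← Real.rpow_add hx0, ← Real.rpow_add hx0]
        _ ≤ x ^ (1 - 2*ε^2) := hxpow _ _ (by nlinarith)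
    · -- j odd, j = 2k+1
      obtain ⟨k, hk⟩ := ho
      have hH := hL2k k (by omega)
      rw [show 2*k+1 = j by omega, List.getD_eq_getElem L 1 hjr] at hH
      have hDq : D * (L[j] : ℝ) ≤ x ^ ((3:ℝ)/7 - ε) := by
        calc D * (L[j] : ℝ) ≤ (((L.take j).prod : ℝ) * (L[j] : ℝ)) * (L[j] : ℝ) :=
              mul_le_mul_of_nonneg_right hDlt.le hqr.le
          _ = ((L.take j).prod : ℝ) * (L[j] : ℝ)^2 := by ring
          _ ≤ x ^ ((3:ℝ)/7 - ε) := hH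
      apply le_of_mul_le_mul_right ?_ (hxpos ((1:ℝ)/3 - 2*ε^2))
      calc ((L.take j).prod : ℝ) * ((L.drop j).prod : ℝ)^2 * D * x ^ ((1:ℝ)/3 - 2*ε^2)
          ≤ ((L.take j).prod : ℝ) * ((L.drop j).prod : ℝ)^2 * D * D := by
            apply mul_le_mul_of_nonneg_left hDlo (by positivity)
        _ = (D * (((L.take j).prod : ℝ) * ((L.drop j).prod : ℝ)^2)) * D := by ring
        _ ≤ ((((L.take j).prod : ℝ) * ((L.drop j).prod : ℝ))^2 * (L[j] : ℝ)) * D :=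
            mul_le_mul_of_nonneg_right key hD0.le
        _ = (((L.take j).prod : ℝ) * ((L.drop j).prod : ℝ))^2 * (D * (L[j] : ℝ)) := by ring
        _ ≤ (x ^ ((3:ℝ)/7 - ε))^2 * x ^ ((3:ℝ)/7 - ε) :=
            mul_le_mul (pow_le_pow_left₀ hddnn hdd 2) hDq (by positivity) (by positivity)
        _ = x ^ (((3:ℝ)/7 - ε) + ((3:ℝ)/7 - ε) + ((3:ℝ)/7 - ε)) := by
            rw [sq, ← Real.rpow_add hx0, ← Real.rpow_add hx0]
        _ ≤ x ^ ((1 - 2*ε^2) + ((1:ℝ)/3 - 2*ε^2)) := hxpow _ _ (by nlinarith)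
        _ = x ^ (1 - 2*ε^2) * x ^ ((1:ℝ)/3 - 2*ε^2) := Real.rpow_add hx0 _ _
end

section
/- For ρ = 3/7 · (1 - 4θ) + 3ε with θ ∈ [0, 1/30] and ε > 0 small, the factorization property fails: taking D = x^(3/7·(1-4θ)), there exist primes p₁, p₂, p₃, each lying in [x^((1-4θ)/7 + ε)/2, x^((1-4θ)/7 + ε)), with p₁ > p₂ > p₃, p₁p₂p₃ ≤ x^ρ, such that p₁p₂p₃ admits no factorization d₁d₂ with d₁ ≤ D and d₁d₂² ≤ x^(1-4θ-2ε²)/D. -/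
/-- Optimality of the exponent ρ = 3/7·(1-4θ) in the semilinear sieve weight
factorization lemma: for ρ = 3/7·(1-4θ) + 3ε and D = x^(3/7·(1-4θ)), a product
of three primes p₁ > p₂ > p₃ in the dyadic range
[x^((1-4θ)/7+ε)/2, x^((1-4θ)/7+ε)) lies below x^ρ but admits no factorization
d₁d₂ with d₁ ≤ D and d₁d₂² ≤ x^(1-4θ-2ε²)/D. -/
theorem stmt_9 (θ ε : ℝ) (hθ0 : 0 ≤ θ) (hθ : θ ≤ 1/30) (hε : 0 < ε)
    (hε' : ε < 1/100) :
    ∃ x₀ : ℝ, ∀ x : ℝ, x₀ ≤ x →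
    ∀ p₁ p₂ p₃ : ℕ, p₁.Prime → p₂.Prime → p₃.Prime → p₃ < p₂ → p₂ < p₁ →
      (∀ p ∈ [p₁, p₂, p₃],
        x ^ ((1 - 4*θ)/7 + ε) / 2 ≤ (p : ℝ) ∧ (p : ℝ) < x ^ ((1 - 4*θ)/7 + ε)) →
      ((p₁ * p₂ * p₃ : ℕ) : ℝ) ≤ x ^ ((3:ℝ)/7 * (1 - 4*θ) + 3*ε) ∧
      ∀ d₁ d₂ : ℕ, 0 < d₁ → 0 < d₂ → p₁ * p₂ * p₃ = d₁ * d₂ →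
        ¬ ((d₁ : ℝ) ≤ x ^ ((3:ℝ)/7 * (1 - 4*θ)) ∧
           (d₁ : ℝ) * (d₂ : ℝ)^2 ≤ x ^ (1 - 4*θ - 2*ε^2) / x ^ ((3:ℝ)/7 * (1 - 4*θ))) := by
  refine ⟨max 2 ((2:ℝ) ^ ((3:ℝ)/ε)), fun x hx p₁ p₂ p₃ hp₁ hp₂ hp₃ h32 h21 hr => ?_⟩
  have hx2 : (2:ℝ) ≤ x := le_trans (le_max_left _ _) hx
  have hx0 : (0:ℝ) < x := by linarith
  have hx1 : (1:ℝ) ≤ x := by linarith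
  set β : ℝ := (1 - 4*θ)/7 with hβdef
  set s : ℝ := x ^ β with hsdef
  set t : ℝ := x ^ ε with htdef
  have hs0 : 0 < s := Real.rpow_pos_of_pos hx0 β
  have ht0 : 0 < t := Real.rpow_pos_of_pos hx0 ε
  have ht8 : (8:ℝ) ≤ t := by
    have h2x : (2:ℝ) ^ ((3:ℝ)/ε) ≤ x := le_trans (le_max_right _ _) hx
    have h1' : ((2:ℝ) ^ ((3:ℝ)/ε)) ^ ε ≤ x ^ ε :=
      Real.rpow_le_rpow (by positivity) h2x hε.le
    have h2' : ((2:ℝ) ^ ((3:ℝ)/ε)) ^ ε = 8 := by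
      rw [← Real.rpow_mul (by norm_num), div_mul_cancel₀ _ hε.ne']
      rw [show (3:ℝ) = ((3:ℕ):ℝ) by norm_num, Real.rpow_natCast]
      norm_num
    rw [h2'] at h1'
    exact h1'
  have hXα : x ^ (β + ε) = s * t := Real.rpow_add hx0 β ε
  clear_value s t
  have hcube : ∀ c : ℝ, x ^ (c * 3) = (x ^ c) ^ (3:ℕ) := fun c => by
    rw [show (3:ℝ) = ((3:ℕ):ℝ) by norm_num, Real.rpow_mul hx0.le, Real.rpow_natCast]
  have hfour : x ^ (β * 4) = s ^ (4:ℕ) := by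
    rw [show (4:ℝ) = ((4:ℕ):ℝ) by norm_num, Real.rpow_mul hx0.le, Real.rpow_natCast, ← hsdef]
  obtain ⟨h1l, h1u⟩ := hr p₁ (by simp)
  obtain ⟨h2l, h2u⟩ := hr p₂ (by simp)
  obtain ⟨h3l, h3u⟩ := hr p₃ (by simp)
  rw [hXα] at h1l h1u h2l h2u h3l h3u
  have hst2 : (0:ℝ) < s * t / 2 := by positivity
  have hD : x ^ ((3:ℝ)/7 * (1 - 4*θ)) = s ^ (3:ℕ) := by
    rw [show (3:ℝ)/7 * (1 - 4*θ) = β * 3 by rw [hβdef]; ring, hcube, ← hsdef]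
  have hNlow : (s*t/2) ^ (3:ℕ) ≤ ((p₁ * p₂ * p₃ : ℕ) : ℝ) := by
    push_cast
    have m12 : (s*t/2) * (s*t/2) ≤ (p₁:ℝ) * p₂ :=
      mul_le_mul h1l h2l hst2.le (Nat.cast_nonneg _)
    have m123 : ((s*t/2) * (s*t/2)) * (s*t/2) ≤ (p₁:ℝ) * p₂ * p₃ :=
      mul_le_mul m12 h3l hst2.le (by positivity)
    calc (s*t/2) ^ (3:ℕ) = ((s*t/2) * (s*t/2)) * (s*t/2) := by ring
    _ ≤ (p₁:ℝ) * p₂ * p₃ := m123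
  constructor
  · push_cast
    have hρ : x ^ ((3:ℝ)/7 * (1 - 4*θ) + 3*ε) = (s*t) ^ (3:ℕ) := by
      rw [show (3:ℝ)/7 * (1 - 4*θ) + 3*ε = (β + ε) * 3 by rw [hβdef]; ring, hcube, hXα]
    rw [hρ]
    have m12 : (p₁:ℝ) * p₂ ≤ (s*t) * (s*t) :=
      mul_le_mul h1u.le h2u.le (Nat.cast_nonneg _) (by positivity)
    have m123 : (p₁:ℝ) * p₂ * p₃ ≤ ((s*t) * (s*t)) * (s*t) :=
      mul_le_mul m12 h3u.le (Nat.cast_nonneg _) (by positivity)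
    calc (p₁:ℝ) * p₂ * p₃ ≤ ((s*t) * (s*t)) * (s*t) := m123
    _ = (s*t) ^ (3:ℕ) := by ring
  · rintro d₁ d₂ hd1 hd2 heq ⟨hA, hB⟩
    have heqR : ((p₁ * p₂ * p₃ : ℕ) : ℝ) = (d₁:ℝ) * (d₂:ℝ) := by exact_mod_cast congrArg (Nat.cast : ℕ → ℝ) heq
    rcases Nat.lt_or_ge d₂ 2 with h | h
    · have hd2' : d₂ = 1 := by omega
      subst hd2'
      rw [hD] at hA
      rw [heqR] at hNlow
      have ht3 : (512:ℝ) ≤ t ^ (3:ℕ) := by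
        calc (512:ℝ) = 8 ^ (3:ℕ) := by norm_num
        _ ≤ t ^ (3:ℕ) := pow_le_pow_left₀ (by norm_num) ht8 3
      have hs3 : (0:ℝ) < s ^ (3:ℕ) := pow_pos hs0 3
      have hkey : s ^ (3:ℕ) * 512 ≤ s ^ (3:ℕ) * t ^ (3:ℕ) :=
        mul_le_mul_of_nonneg_left ht3 hs3.le
      have hex : (s*t/2) ^ (3:ℕ) = s ^ (3:ℕ) * t ^ (3:ℕ) / 8 := by ring
      rw [hex] at hNlow
      norm_num at hNlow
      linarith
    · obtain ⟨q, hq, hqd⟩ := Nat.exists_prime_and_dvd (show d₂ ≠ 1 by omega)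
      have hqN : q ∣ p₁ * p₂ * p₃ := by rw [heq]; exact hqd.mul_left d₁
      have hq3 : q = p₁ ∨ q = p₂ ∨ q = p₃ := by
        rcases (Nat.Prime.dvd_mul hq).mp hqN with h' | h'
        · rcases (Nat.Prime.dvd_mul hq).mp h' with h'' | h''
          · exact Or.inl ((Nat.prime_dvd_prime_iff_eq hq hp₁).mp h'')
          · exact Or.inr (Or.inl ((Nat.prime_dvd_prime_iff_eq hq hp₂).mp h''))
        · exact Or.inr (Or.inr ((Nat.prime_dvd_prime_iff_eq hq hp₃).mp h'))
      have hqR : s*t/2 ≤ (q:ℝ) := by rcases hq3 with rfl | rfl | rfl <;> assumption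
      have hd2R : s*t/2 ≤ (d₂:ℝ) :=
        le_trans hqR (Nat.cast_le.mpr (Nat.le_of_dvd (by omega) hqd))
      have hRHS : x ^ (1 - 4*θ - 2*ε^2) / x ^ ((3:ℝ)/7 * (1 - 4*θ)) ≤ s ^ (4:ℕ) := by
        rw [← Real.rpow_sub hx0, ← hfour]
        apply Real.rpow_le_rpow_of_exponent_le hx1
        have hβ4 : β * 4 = 4 * (1 - 4*θ) / 7 := by rw [hβdef]; ring
        nlinarith [sq_nonneg ε, hβ4]
      have hBB : (d₁:ℝ) * (d₂:ℝ)^2 ≤ s ^ (4:ℕ) := le_trans hB hRHS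
      have hprod : (s*t/2) ^ (4:ℕ) ≤ (d₁:ℝ) * (d₂:ℝ)^2 := by
        have hrw : (d₁:ℝ) * (d₂:ℝ)^2 = ((p₁ * p₂ * p₃ : ℕ) : ℝ) * d₂ := by
          rw [heqR]; ring
        rw [hrw]
        calc (s*t/2) ^ (4:ℕ) = (s*t/2) ^ (3:ℕ) * (s*t/2) := by ring
        _ ≤ ((p₁ * p₂ * p₃ : ℕ) : ℝ) * d₂ :=
          mul_le_mul hNlow hd2R hst2.le (Nat.cast_nonneg _)
      have hfin : (s*t/2) ^ (4:ℕ) ≤ s ^ (4:ℕ) := le_trans hprod hBB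
      have ht4 : (4096:ℝ) ≤ t ^ (4:ℕ) := by
        calc (4096:ℝ) = 8 ^ (4:ℕ) := by norm_num
        _ ≤ t ^ (4:ℕ) := pow_le_pow_left₀ (by norm_num) ht8 4
      have hs4 : (0:ℝ) < s ^ (4:ℕ) := pow_pos hs0 4
      have hkey : s ^ (4:ℕ) * 4096 ≤ s ^ (4:ℕ) * t ^ (4:ℕ) :=
        mul_le_mul_of_nonneg_left ht4 hs4.le
      have hex : (s*t/2) ^ (4:ℕ) = s ^ (4:ℕ) * t ^ (4:ℕ) / 16 := by ring
      rw [hex] at hfin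
      linarith
end

section
/- Let q ≥ 2 and a be integers with gcd(a, q) = 1. Let K, b, V be integers with gcd(q, V) = 1, gcd(b, K) = 1, and with the property that gcd(b-1, p) = 1 for every prime p dividing K with p ≡ -1 (mod 4) and p ≠ 3. Define s(q) as the product of the distinct primes p dividing q with p ≡ -1 (mod 4) and p ≠ 3. Then the exponential sum S = Σ over n mod q with gcd(KVn + b, q) = 1 and gcd(KVn + b - 1, s(q)) = 1 of e(an/q) satisfies |S| ≤ τ(q) if gcd(q, K) = 1, and S = 0 if gcd(q, K) > 1. -/
/-!
Writing `x = c n + b` with `c = K V`, Möbius inversion expands the two coprimality conditions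
into a double sum over `d ∣ q`, `e ∣ s(q)` of `μ(d) μ(e)` times the exponential sum over those
`n < q` with `d ∣ x` and `e ∣ x - 1`. That condition is periodic in `n` with period `lcm d e`,
and an exponential sum `∑ f(n) e(an/q)` with `gcd(a, q) = 1` over a condition of period `m < q`,
`m ∣ q`, vanishes. So only the pairs with `d e = q` survive, and for each of them `x` is fixed
modulo `q`, which leaves at most one `n` when `c` is invertible mod `q`; there are at most `τ(q)`
such pairs. If instead a prime `p` divides `gcd(q, K)`, the whole condition has period `q / p`,
so the sum vanishes outright.
-/

open Finset

/-- `sFun q` is the product of the distinct primes `p ∣ q` with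
`p ≡ -1 (mod 4)` and `p ≠ 3`. -/
def sFun (n : ℕ) : ℕ := ∏ p ∈ n.primeFactors.filter (fun p => p % 4 = 3 ∧ p ≠ 3), p

open Function ArithmeticFunction ZMod
open scoped ArithmeticFunction.Moebius

theorem Function.Periodic.sum_range_add {M : Type*} [AddCommMonoid M] {g : ℕ → M} {q : ℕ}
    (hg : Periodic g q) (m : ℕ) : ∑ n ∈ range q, g (n + m) = ∑ n ∈ range q, g n := by
  induction m generalizing g with
  | zero => rfl
  | succ m ih =>
    have hshift : ∑ n ∈ range q, g (n + 1) = ∑ n ∈ range q, g n := by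
      cases q with
      | zero => rfl
      | succ q => rw [sum_range_succ, show g (q + 1) = g 0 by simpa using hg 0, sum_range_succ' g]
    exact (ih (hg.add_const 1)).trans hshift

theorem IsUnit.mul_natCast_ne_zero {q m : ℕ} {a : ZMod q} (ha : IsUnit a) (hm : 0 < m)
    (hmq : m < q) : a * m ≠ 0 := by
  rw [Ne, ha.mul_right_eq_zero, natCast_eq_zero_iff]
  exact Nat.not_dvd_of_pos_of_lt hm hmq

theorem norm_moebius_le_one (n : ℕ) : ‖(μ n : ℂ)‖ ≤ 1 := by
  rw [Complex.norm_intCast]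
  exact_mod_cast abs_moebius_le_one

theorem ite_gcd_eq_one_eq_sum_moebius {R : Type*} [Ring R] (x : ℤ) {t : ℕ} (ht : t ≠ 0) :
    (if Int.gcd x t = 1 then 1 else 0 : R) =
      ∑ d ∈ t.divisors, if (d : ℤ) ∣ x then (μ d : R) else 0 := by
  have hdiv : {d ∈ t.divisors | ((d : ℕ) : ℤ) ∣ x} = (Int.gcd x t).divisors := by
    refine (filter_congr fun d hd => ?_).trans
      (Nat.divisors_filter_dvd_of_dvd ht (by exact_mod_cast Int.gcd_dvd_right x t))
    simp [Int.gcd, Int.natCast_dvd, Nat.dvd_gcd_iff, Nat.dvd_of_mem_divisors hd]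
  rw [← sum_filter, hdiv, ← ArithmeticFunction.one_apply, ← coe_moebius_mul_coe_zeta,
    coe_mul_zeta_apply]
  simp only [intCoe_apply]

theorem periodic_gcd_of_dvd_mul {c : ℤ} {t m : ℕ} (h : (t : ℤ) ∣ c * m) (b : ℤ) :
    Periodic (fun n : ℕ => Int.gcd (c * n + b) t) m := fun n => by
  obtain ⟨k, hk⟩ := h
  have hshift : c * ↑(n + m) + b = c * n + b + t * k := by push_cast; rw [← hk]; ring
  simp only [hshift, Int.gcd_add_mul_left_left]

theorem exp_eq_stdAddChar (q : ℕ) [NeZero q] (a : ℤ) (n : ℕ) :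
    Complex.exp (2 * (Real.pi : ℂ) * Complex.I * a * n / q) =
      stdAddChar ((a : ZMod q) * (n : ZMod q)) := by
  rw [show (a : ZMod q) * (n : ZMod q) = ((a * n : ℤ) : ZMod q) by push_cast; rfl, stdAddChar_coe]
  push_cast
  ring_nf

noncomputable def expSum (q : ℕ) [NeZero q] (a : ZMod q) (P : ℕ → Prop)
    [DecidablePred P] : ℂ :=
  ∑ n ∈ range q with P n, stdAddChar (a * (n : ZMod q))

theorem norm_expSum_le (q : ℕ) [NeZero q] (a : ZMod q) (P : ℕ → Prop) [DecidablePred P] :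
    ‖expSum q a P‖ ≤ #{n ∈ range q | P n} := by
  refine (norm_sum_le _ _).trans ?_
  simp [stdAddChar_apply, Circle.norm_coe]

/-- Shifting `n` by `m` multiplies the sum by `e(am/q) ≠ 1`. -/
theorem expSum_eq_zero_of_periodic {q m : ℕ} [NeZero q] {a : ZMod q} {P : ℕ → Prop}
    [DecidablePred P] (hP : Periodic P m) (hm : m ∣ q) (ham : a * m ≠ 0) :
    expSum q a P = 0 := by
  set g : ℕ → ℂ := fun n => if P n then stdAddChar (a * (n : ZMod q)) else 0
  have hPq : Periodic P q := by
    obtain ⟨k, hk⟩ := hm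
    rw [hk, mul_comm]
    exact hP.nat_mul k
  have hg : Periodic g q := fun n => by
    simp only [g, hPq n]
    push_cast
    simp
  have hgm : ∀ n, g (n + m) = stdAddChar (a * (m : ZMod q)) * g n := fun n => by
    simp only [g, hP n]
    push_cast
    split_ifs <;> simp [mul_add, AddChar.map_add_eq_mul, mul_comm]
  have hψ : stdAddChar (a * (m : ZMod q)) ≠ 1 := by
    rw [← AddChar.map_zero_eq_one (stdAddChar (N := q)), Ne, injective_stdAddChar.eq_iff]
    exact ham
  have h : stdAddChar (a * (m : ZMod q)) * expSum q a P = expSum q a P := by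
    rw [expSum, sum_filter, mul_sum, ← hg.sum_range_add m]
    exact sum_congr rfl fun n _ => (hgm n).symm
  by_contra hS
  exact hψ ((mul_eq_right₀ hS).mp h)

abbrev SolvesPair (c b : ℤ) (d e n : ℕ) : Prop :=
  (d : ℤ) ∣ c * n + b ∧ (e : ℤ) ∣ c * n + b - 1

abbrev CoprimePair (c b : ℤ) (q s n : ℕ) : Prop :=
  Int.gcd (c * n + b) q = 1 ∧ Int.gcd (c * n + b - 1) s = 1

section SolvesPair

variable {c b : ℤ} {d e : ℕ}

theorem periodic_solvesPair {m : ℕ} (hd : d ∣ m) (he : e ∣ m) :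
    Periodic (SolvesPair c b d e) m := fun n => by
  have hshift : c * ↑(n + m) + b = c * n + b + c * m := by push_cast; ring
  rw [SolvesPair, SolvesPair, hshift, add_sub_right_comm,
    dvd_add_left (dvd_mul_of_dvd_right (Int.natCast_dvd_natCast.2 hd) c),
    dvd_add_left (dvd_mul_of_dvd_right (Int.natCast_dvd_natCast.2 he) c)]

theorem SolvesPair.coprime {n : ℕ} (h : SolvesPair c b d e n) : Nat.Coprime d e := by
  have hg : ((Nat.gcd d e : ℕ) : ℤ) ∣ (c * n + b) - (c * n + b - 1) :=
    dvd_sub ((Int.natCast_dvd_natCast.2 (Nat.gcd_dvd_left d e)).trans h.1)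
      ((Int.natCast_dvd_natCast.2 (Nat.gcd_dvd_right d e)).trans h.2)
  rw [sub_sub_cancel] at hg
  exact Nat.eq_one_of_dvd_one (by exact_mod_cast hg)

theorem card_filter_solvesPair_le_one {q : ℕ} (hc : IsCoprime (q : ℤ) c) (hq : d * e = q) :
    #{n ∈ range q | SolvesPair c b d e n} ≤ 1 := by
  refine card_le_one.2 fun n₁ hn₁ n₂ hn₂ => ?_
  simp only [mem_filter, mem_range] at hn₁ hn₂
  have hd : (d : ℤ) ∣ c * (n₁ - n₂) := by
    rw [show c * ((n₁ : ℤ) - n₂) = (c * n₁ + b) - (c * n₂ + b) by ring]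
    exact dvd_sub hn₁.2.1 hn₂.2.1
  have he : (e : ℤ) ∣ c * (n₁ - n₂) := by
    rw [show c * ((n₁ : ℤ) - n₂) = (c * n₁ + b - 1) - (c * n₂ + b - 1) by ring]
    exact dvd_sub hn₁.2.2 hn₂.2.2
  have hq' : (q : ℤ) ∣ (n₁ : ℤ) - n₂ := by
    refine hc.dvd_of_dvd_mul_left ?_
    rw [← hq, Nat.cast_mul]
    exact (Nat.isCoprime_iff_coprime.2 hn₁.2.coprime).mul_dvd hd he
  have := Int.eq_zero_of_abs_lt_dvd hq' (by rw [abs_lt]; omega)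
  omega

variable {q : ℕ} [NeZero q] {a : ZMod q}

theorem mul_eq_of_expSum_solvesPair_ne_zero (ha : IsUnit a) (hd : d ∣ q) (he : e ∣ q)
    (h : expSum q a (SolvesPair c b d e) ≠ 0) : d * e = q := by
  obtain ⟨n, -, hn⟩ : ∃ n ∈ range q, SolvesPair c b d e n := by
    by_contra! hempty
    exact h (sum_eq_zero fun n hn => absurd (mem_filter.1 hn).2 (hempty n (mem_filter.1 hn).1))
  rw [← hn.coprime.lcm_eq_mul]
  by_contra hlcm
  have hlt : Nat.lcm d e < q :=
    (Nat.le_of_dvd (Nat.pos_of_neZero q) (Nat.lcm_dvd hd he)).lt_of_ne hlcm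
  refine h (expSum_eq_zero_of_periodic (periodic_solvesPair (Nat.dvd_lcm_left d e)
    (Nat.dvd_lcm_right d e)) (Nat.lcm_dvd hd he) (ha.mul_natCast_ne_zero ?_ hlt))
  exact Nat.lcm_pos (Nat.pos_of_dvd_of_pos hd (Nat.pos_of_neZero q))
    (Nat.pos_of_dvd_of_pos he (Nat.pos_of_neZero q))

theorem norm_expSum_solvesPair_le (ha : IsUnit a) (hc : IsCoprime (q : ℤ) c) (hd : d ∣ q)
    (he : e ∣ q) : ‖expSum q a (SolvesPair c b d e)‖ ≤ if d * e = q then 1 else 0 := by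
  by_cases h0 : expSum q a (SolvesPair c b d e) = 0
  · rw [h0, norm_zero]
    split_ifs <;> norm_num
  · have hde := mul_eq_of_expSum_solvesPair_ne_zero ha hd he h0
    rw [if_pos hde]
    exact (norm_expSum_le ..).trans (by exact_mod_cast card_filter_solvesPair_le_one hc hde)

end SolvesPair

theorem periodic_coprimePair {c b : ℤ} {q s m : ℕ} (hq : (q : ℤ) ∣ c * m)
    (hs : (s : ℤ) ∣ c * m) : Periodic (CoprimePair c b q s) m := fun n => by
  have hq' := periodic_gcd_of_dvd_mul hq b n
  have hs' := periodic_gcd_of_dvd_mul hs (b - 1) n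
  simp only [CoprimePair, add_sub_assoc] at hq' hs' ⊢
  rw [hq', hs']

section Sieve

variable {q : ℕ} [NeZero q] {a : ZMod q} {c b : ℤ} {s : ℕ}

theorem expSum_coprimePair_eq_sum_moebius (hs : s ≠ 0) :
    expSum q a (CoprimePair c b q s) =
      ∑ d ∈ q.divisors, ∑ e ∈ s.divisors,
        (μ d * μ e : ℂ) * expSum q a (SolvesPair c b d e) := by
  have hpoint : ∀ n : ℕ,
      (if CoprimePair c b q s n then stdAddChar (a * (n : ZMod q)) else 0) =
      ∑ d ∈ q.divisors, ∑ e ∈ s.divisors, (μ d * μ e : ℂ) *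
        if SolvesPair c b d e n then stdAddChar (a * (n : ZMod q)) else 0 := fun n => by
    calc _ = (if Int.gcd (c * n + b) q = 1 then 1 else 0 : ℂ) *
          (if Int.gcd (c * n + b - 1) s = 1 then 1 else 0) * stdAddChar (a * (n : ZMod q)) := by
          split_ifs <;> simp_all
      _ = (∑ d ∈ q.divisors, if (d : ℤ) ∣ c * n + b then (μ d : ℂ) else 0) *
          (∑ e ∈ s.divisors, if (e : ℤ) ∣ c * n + b - 1 then (μ e : ℂ) else 0) *
          stdAddChar (a * (n : ZMod q)) := by
        rw [ite_gcd_eq_one_eq_sum_moebius _ (NeZero.ne q), ite_gcd_eq_one_eq_sum_moebius _ hs]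
      _ = _ := by
        rw [sum_mul_sum, sum_mul]
        refine sum_congr rfl fun d _ => ?_
        rw [sum_mul]
        refine sum_congr rfl fun e _ => ?_
        split_ifs <;> simp_all
  simp only [expSum, sum_filter, mul_sum, hpoint]
  rw [sum_comm]
  exact sum_congr rfl fun d _ => sum_comm

theorem norm_expSum_coprimePair_le (ha : IsUnit a) (hc : IsCoprime (q : ℤ) c) (hs : s ∣ q) :
    ‖expSum q a (CoprimePair c b q s)‖ ≤ #q.divisors := by
  rw [expSum_coprimePair_eq_sum_moebius (ne_zero_of_dvd_ne_zero (NeZero.ne q) hs)]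
  calc _ ≤ ∑ d ∈ q.divisors, ∑ e ∈ s.divisors,
        ‖(μ d * μ e : ℂ) * expSum q a (SolvesPair c b d e)‖ :=
        (norm_sum_le _ _).trans (sum_le_sum fun d _ => norm_sum_le _ _)
    _ ≤ ∑ d ∈ q.divisors, ∑ e ∈ s.divisors, if d * e = q then (1 : ℝ) else 0 := by
        refine sum_le_sum fun d hd => sum_le_sum fun e he => ?_
        rw [norm_mul, norm_mul]
        refine (mul_le_of_le_one_left (norm_nonneg _) ?_).trans (norm_expSum_solvesPair_le ha hc
          (Nat.dvd_of_mem_divisors hd) ((Nat.dvd_of_mem_divisors he).trans hs))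
        exact mul_le_one₀ (norm_moebius_le_one d) (norm_nonneg _) (norm_moebius_le_one e)
    _ ≤ ∑ d ∈ q.divisors, 1 := by
        refine sum_le_sum fun d hd => ?_
        rw [sum_boole]
        refine Nat.cast_le_one.2 (card_le_one.2 fun e₁ h₁ e₂ h₂ => ?_)
        rw [mem_filter] at h₁ h₂
        exact Nat.eq_of_mul_eq_mul_left (Nat.pos_of_mem_divisors hd) (h₁.2.trans h₂.2.symm)
    _ = #q.divisors := by rw [sum_const, nsmul_one]

theorem expSum_coprimePair_eq_zero (ha : IsUnit a) {p : ℕ} (hp : p.Prime) (hpq : p ∣ q)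
    (hpc : (p : ℤ) ∣ c) (hs : s ∣ q) : expSum q a (CoprimePair c b q s) = 0 := by
  have hq : (q : ℤ) ∣ c * ↑(q / p) := by
    obtain ⟨k, rfl⟩ := hpc
    rw [mul_right_comm, ← Nat.cast_mul, Nat.mul_div_cancel' hpq]
    exact dvd_mul_right (q : ℤ) k
  have hs : (s : ℤ) ∣ c * ↑(q / p) := (Int.natCast_dvd_natCast.2 hs).trans hq
  refine expSum_eq_zero_of_periodic (periodic_coprimePair hq hs) (Nat.div_dvd_of_dvd hpq)
    (ha.mul_natCast_ne_zero (Nat.div_pos (Nat.le_of_dvd (Nat.pos_of_neZero q) hpq) hp.pos)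
      (Nat.div_lt_self (Nat.pos_of_neZero q) hp.one_lt))

end Sieve

theorem sFun_dvd (q : ℕ) : sFun q ∣ q :=
  (prod_dvd_prod_of_subset _ _ _ (filter_subset _ _)).trans (Nat.prod_primeFactors_dvd q)

theorem stmt_10_general (q : ℕ) (hq : 2 ≤ q) (a K b V : ℤ)
    (ha : Int.gcd a q = 1) (hV : Int.gcd (q : ℤ) V = 1) :
    (Int.gcd (q : ℤ) K = 1 →
      ‖∑ n ∈ Finset.range q,
        if Int.gcd (K * V * n + b) q = 1 ∧ Int.gcd (K * V * n + b - 1) (sFun q) = 1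
        then Complex.exp (2 * (Real.pi : ℂ) * Complex.I * a * n / q) else 0‖
      ≤ (q.divisors.card : ℝ)) ∧
    (1 < Int.gcd (q : ℤ) K →
      (∑ n ∈ Finset.range q,
        if Int.gcd (K * V * n + b) q = 1 ∧ Int.gcd (K * V * n + b - 1) (sFun q) = 1
        then Complex.exp (2 * (Real.pi : ℂ) * Complex.I * a * n / q) else 0) = 0) := by
  have : NeZero q := ⟨by omega⟩
  have hunit : IsUnit (a : ZMod q) :=
    (coe_int_isUnit_iff_isCoprime a q).2 (Int.isCoprime_iff_gcd_eq_one.2 (by rwa [Int.gcd_comm]))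
  simp only [exp_eq_stdAddChar, ← sum_filter]
  refine ⟨fun hK => norm_expSum_coprimePair_le hunit ?_ (sFun_dvd q), fun hK => ?_⟩
  · exact (Int.isCoprime_iff_gcd_eq_one.2 hK).mul_right (Int.isCoprime_iff_gcd_eq_one.2 hV)
  · obtain ⟨p, hp, hpg⟩ := Nat.exists_prime_and_dvd hK.ne'
    exact expSum_coprimePair_eq_zero hunit hp (hpg.trans (Nat.gcd_dvd_left _ _))
      (((Int.natCast_dvd_natCast.2 hpg).trans (Int.gcd_dvd_right _ _)).mul_right V) (sFun_dvd q)

theorem stmt_10 (q : ℕ) (hq : 2 ≤ q) (a K b V : ℤ)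
    (ha : Int.gcd a q = 1) (hV : Int.gcd (q : ℤ) V = 1) (hbK : Int.gcd b K = 1)
    (hb1 : ∀ p : ℕ, p.Prime → (p : ℤ) ∣ K → p % 4 = 3 → p ≠ 3 →
      Int.gcd (b - 1) p = 1) :
    (Int.gcd (q : ℤ) K = 1 →
      ‖∑ n ∈ Finset.range q,
        if Int.gcd (K * V * n + b) q = 1 ∧ Int.gcd (K * V * n + b - 1) (sFun q) = 1
        then Complex.exp (2 * (Real.pi : ℂ) * Complex.I * a * n / q) else 0‖
      ≤ (q.divisors.card : ℝ)) ∧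
    (1 < Int.gcd (q : ℤ) K →
      (∑ n ∈ Finset.range q,
        if Int.gcd (K * V * n + b) q = 1 ∧ Int.gcd (K * V * n + b - 1) (sFun q) = 1
        then Complex.exp (2 * (Real.pi : ℂ) * Complex.I * a * n / q) else 0) = 0) :=
  stmt_10_general q hq a K b V ha hV
end

section
/- Define I₁(ρ₂, σ) = (1/(2√ρ₂)) ∫₁^{ρ₂σ} dt/√(t(t-1)) and I₂(ρ₁, σ) = (1/(2ρ₁)) ∫₂^σ log(t-1)/(t·(1 - t/σ)^(1/2)) dt. Then with ρ₁ = 1/2, ρ₂ = 3/7, σ = 3, one has I₁(ρ₂, σ) > I₂(ρ₁, σ) + 10^(-3). -/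
/-!
Each integrand is a smooth factor times a weight `(t - 1)^(-1/2)` or `√σ (σ - t)^(-1/2)` whose
integral is explicit; bounding the smooth factor by a constant on a subinterval bounds the
integral there. For `I₁` one interval suffices: `1/√t ≥ 1/√b` gives `∫₁^b ≥ 2√((b-1)/b)`, so the
left side exceeds `0.72`. For `I₂` the factor `log(t-1)/t` is increasing; splitting `[2, 3]` at
`7/3` and `8/3`, where `√(3(3 - t))` equals `√2` and `1`, bounds the integral by `0.7157`.
-/

open MeasureTheory intervalIntegral Real Set

theorem integral_sub_rpow_neg_half (a b c : ℝ) :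
    ∫ t in a..b, (t - c) ^ (-(1 / 2) : ℝ) = 2 * (√(b - c) - √(a - c)) := by
  rw [integral_comp_sub_right (fun u => u ^ (-(1 / 2) : ℝ)), integral_rpow (by norm_num),
    sqrt_eq_rpow, sqrt_eq_rpow]
  norm_num
  ring

theorem integral_rsub_rpow_neg_half (a b c : ℝ) :
    ∫ t in a..b, (c - t) ^ (-(1 / 2) : ℝ) = 2 * (√(c - a) - √(c - b)) := by
  rw [integral_comp_sub_left (fun u => u ^ (-(1 / 2) : ℝ)), integral_rpow (by norm_num),
    sqrt_eq_rpow, sqrt_eq_rpow]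
  norm_num
  ring

theorem intervalIntegrable_sub_rpow_neg_half (a b c : ℝ) :
    IntervalIntegrable (fun t => (t - c) ^ (-(1 / 2) : ℝ)) volume a b := by
  simpa using (intervalIntegrable_rpow' (a := a - c) (b := b - c)
    (by norm_num : (-1 : ℝ) < -(1 / 2))).comp_sub_right c

theorem intervalIntegrable_rsub_rpow_neg_half (a b c : ℝ) :
    IntervalIntegrable (fun t => (c - t) ^ (-(1 / 2) : ℝ)) volume a b := by
  simpa using (intervalIntegrable_rpow' (a := c - a) (b := c - b)
    (by norm_num : (-1 : ℝ) < -(1 / 2))).comp_sub_left c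

section WeightedIntegral

variable {f w : ℝ → ℝ} {a b c : ℝ}

theorem integral_mul_le_mul_integral (hab : a ≤ b) (hf : ContinuousOn f (uIcc a b))
    (hw : IntervalIntegrable w volume a b) (hw0 : ∀ t ∈ Icc a b, 0 ≤ w t)
    (hfc : ∀ t ∈ Icc a b, f t ≤ c) :
    ∫ t in a..b, f t * w t ≤ c * ∫ t in a..b, w t := by
  rw [← intervalIntegral.integral_const_mul]
  exact integral_mono_on hab (hw.continuousOn_mul hf) (hw.const_mul c)
    fun t ht => mul_le_mul_of_nonneg_right (hfc t ht) (hw0 t ht)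

theorem mul_integral_le_integral_mul (hab : a ≤ b) (hf : ContinuousOn f (uIcc a b))
    (hw : IntervalIntegrable w volume a b) (hw0 : ∀ t ∈ Icc a b, 0 ≤ w t)
    (hcf : ∀ t ∈ Icc a b, c ≤ f t) :
    c * ∫ t in a..b, w t ≤ ∫ t in a..b, f t * w t := by
  rw [← intervalIntegral.integral_const_mul]
  exact integral_mono_on hab (hw.const_mul c) (hw.continuousOn_mul hf)
    fun t ht => mul_le_mul_of_nonneg_right (hcf t ht) (hw0 t ht)

end WeightedIntegral

/- The factorizations below also hold at the singular endpoint, where both sides are junk `0`: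
`x / 0 = 0` and `0 ^ (-(1 / 2)) = 0`. -/
theorem one_div_sqrt_mul_sub_one {t : ℝ} (ht : 1 ≤ t) :
    1 / √(t * (t - 1)) = (√t)⁻¹ * (t - 1) ^ (-(1 / 2) : ℝ) := by
  rw [sqrt_mul (by linarith), one_div, mul_inv, rpow_neg (by linarith), ← sqrt_eq_rpow]

theorem div_mul_sqrt_one_sub_div {σ t : ℝ} (x : ℝ) (hσ : 0 < σ) (ht : t ≤ σ) :
    x / (t * √(1 - t / σ)) = x / t * (√σ * (σ - t) ^ (-(1 / 2) : ℝ)) := by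
  have hσt : 1 - t / σ = (σ - t) / σ := by field_simp
  rw [hσt, sqrt_div (by linarith), rpow_neg (by linarith), ← sqrt_eq_rpow, ← div_div,
    div_eq_mul_inv (x / t), inv_div, div_eq_mul_inv √σ]

theorem two_mul_sqrt_div_le_integral {b : ℝ} (hb : 1 ≤ b) :
    2 * √((b - 1) / b) ≤ ∫ t in (1 : ℝ)..b, 1 / √(t * (t - 1)) := by
  rw [integral_congr fun t ht => one_div_sqrt_mul_sub_one (t := t) (by
    rw [uIcc_of_le hb] at ht; exact ht.1)]
  calc 2 * √((b - 1) / b) = (√b)⁻¹ * ∫ t in (1 : ℝ)..b, (t - 1) ^ (-(1 / 2) : ℝ) := by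
        rw [integral_sub_rpow_neg_half, sub_self, sqrt_zero, sqrt_div' _ (by linarith)]
        ring
    _ ≤ _ := by
      have hsqrt_inv : ContinuousOn (fun t => (√t)⁻¹) (uIcc 1 b) := by
        rw [uIcc_of_le hb]
        exact continuous_sqrt.continuousOn.inv₀ fun t ht => (sqrt_pos.2 (by linarith [ht.1])).ne'
      exact mul_integral_le_integral_mul hb hsqrt_inv (intervalIntegrable_sub_rpow_neg_half _ _ _)
        (fun t ht => rpow_nonneg (by linarith [ht.1]) _)
        fun t ht => inv_anti₀ (sqrt_pos.2 (by linarith [ht.1])) (sqrt_le_sqrt ht.2)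

/-- The tangent line of `log` at `b - 1` has slope `1/(b-1) ≥ c`, so it stays below `c * t` left
of `b`. -/
theorem log_sub_one_le_mul {b c t : ℝ} (hb : 1 < b) (hbc : log (b - 1) ≤ c * b)
    (hc : c * (b - 1) ≤ 1) (ht : 1 < t) (htb : t ≤ b) : log (t - 1) ≤ c * t := by
  have htangent : log (t - 1) ≤ log (b - 1) + (t - 1) / (b - 1) - 1 := by
    have := log_le_sub_one_of_pos (div_pos (by linarith : 0 < t - 1) (by linarith : 0 < b - 1))
    rw [log_div (by linarith) (by linarith)] at this
    linarith
  have hslope : (t - b) / (b - 1) ≤ c * (t - b) := by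
    rw [div_le_iff₀ (by linarith)]
    nlinarith
  have : (t - 1) / (b - 1) - 1 = (t - b) / (b - 1) := by
    rw [div_sub_one (sub_ne_zero.2 hb.ne')]; ring_nf
  linarith

section SieveIntegrand

variable {σ a b : ℝ}

theorem eqOn_log_sub_one_div (hσ : 0 < σ) (hbσ : b ≤ σ) (hab : a ≤ b) :
    EqOn (fun t => log (t - 1) / (t * √(1 - t / σ)))
      (fun t => log (t - 1) / t * (√σ * (σ - t) ^ (-(1 / 2) : ℝ))) (uIcc a b) := by
  intro t ht
  rw [uIcc_of_le hab] at ht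
  exact div_mul_sqrt_one_sub_div _ hσ (ht.2.trans hbσ)

theorem continuousOn_log_sub_one_div (ha : 1 < a) (hab : a ≤ b) :
    ContinuousOn (fun t => log (t - 1) / t) (uIcc a b) := by
  rw [uIcc_of_le hab]
  exact ((continuousOn_id.sub continuousOn_const).log fun t ht =>
    sub_ne_zero.2 (ha.trans_le ht.1).ne').div continuousOn_id fun t ht =>
      (zero_lt_one.trans (ha.trans_le ht.1)).ne'

theorem intervalIntegrable_log_sub_one_div (ha : 1 < a) (hab : a ≤ b) (hbσ : b ≤ σ) :
    IntervalIntegrable (fun t => log (t - 1) / (t * √(1 - t / σ))) volume a b :=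
  (intervalIntegrable_congr ((eqOn_log_sub_one_div (by linarith) hbσ hab).mono
    uIoc_subset_uIcc)).2 <| ((intervalIntegrable_rsub_rpow_neg_half a b σ).const_mul
      √σ).continuousOn_mul (continuousOn_log_sub_one_div ha hab)

theorem integral_log_sub_one_div_le {c : ℝ} (ha : 1 < a) (hab : a ≤ b) (hbσ : b ≤ σ)
    (hc : ∀ t ∈ Icc a b, log (t - 1) ≤ c * t) :
    ∫ t in a..b, log (t - 1) / (t * √(1 - t / σ))
      ≤ 2 * c * (√(σ * (σ - a)) - √(σ * (σ - b))) := by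
  have hσ : 0 < σ := by linarith
  rw [integral_congr (eqOn_log_sub_one_div hσ hbσ hab)]
  calc _ ≤ c * ∫ t in a..b, √σ * (σ - t) ^ (-(1 / 2) : ℝ) :=
        integral_mul_le_mul_integral hab (continuousOn_log_sub_one_div ha hab)
          ((intervalIntegrable_rsub_rpow_neg_half a b σ).const_mul √σ)
          (fun t ht => mul_nonneg (sqrt_nonneg σ) (rpow_nonneg (by linarith [ht.2]) _))
          fun t ht => (div_le_iff₀ (by linarith [ht.1])).2 (hc t ht)
    _ = _ := by
        rw [intervalIntegral.integral_const_mul, integral_rsub_rpow_neg_half,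
          sqrt_mul hσ.le, sqrt_mul hσ.le]
        ring

end SieveIntegrand

theorem two_mul_log_le {x : ℝ} (hx : 0 < x) : 2 * log x ≤ log 2 + x ^ 2 / 2 - 1 := by
  have h := log_le_sub_one_of_pos (by positivity : 0 < x ^ 2 / 2)
  rw [log_div (by positivity) two_ne_zero, log_pow] at h
  push_cast at h
  linarith

theorem log_four_thirds_le : log (4 / 3) ≤ 7 / 24 := by
  linarith [two_mul_log_le (by norm_num : (0 : ℝ) < 4 / 3), log_two_lt_d9]

theorem log_five_thirds_le : log (5 / 3) ≤ 14 / 25 := by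
  linarith [two_mul_log_le (by norm_num : (0 : ℝ) < 5 / 3), log_two_lt_d9]

theorem integral_log_sub_one_div_two_three_le :
    ∫ t in (2 : ℝ)..3, log (t - 1) / (t * √(1 - t / 3)) ≤ 0.7157 := by
  have hI (a b : ℝ) (ha : 2 ≤ a) (hab : a ≤ b) (hb : b ≤ 3) :=
    intervalIntegrable_log_sub_one_div (σ := 3) (by linarith) hab hb
  have hpiece (a b c : ℝ) (ha : 2 ≤ a) (hab : a ≤ b) (hb : b ≤ 3)
      (hbc : log (b - 1) ≤ c * b) (hc : c * (b - 1) ≤ 1) :=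
    integral_log_sub_one_div_le (σ := 3) (c := c) (by linarith) hab hb fun t ht =>
      log_sub_one_le_mul (by linarith) hbc hc (by linarith [ht.1]) ht.2
  have h1 := hpiece 2 (7 / 3) (1 / 8) le_rfl (by norm_num) (by norm_num)
    (by norm_num; linarith [log_four_thirds_le]) (by norm_num)
  have h2 := hpiece (7 / 3) (8 / 3) (21 / 100) (by norm_num) (by norm_num) (by norm_num)
    (by norm_num; linarith [log_five_thirds_le]) (by norm_num)
  have h3 := hpiece (8 / 3) 3 (2311 / 10000) (by norm_num) (by norm_num) le_rfl
    (by norm_num; linarith [log_two_lt_d9]) (by norm_num)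
  norm_num at h1 h2 h3
  rw [← integral_add_adjacent_intervals (hI 2 (8 / 3) le_rfl (by norm_num) (by norm_num))
      (hI (8 / 3) 3 (by norm_num) (by norm_num) le_rfl),
    ← integral_add_adjacent_intervals (hI 2 (7 / 3) le_rfl (by norm_num) (by norm_num))
      (hI (7 / 3) (8 / 3) (by norm_num) (by norm_num) (by norm_num))]
  have hsqrt3 : √3 ≤ 1.7321 := sqrt_le_iff.2 ⟨by norm_num, by norm_num⟩
  have hsqrt2 : √2 ≤ 1.4143 := sqrt_le_iff.2 ⟨by norm_num, by norm_num⟩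
  linarith

/-- Numerical inequality I₁(3/7, 3) > I₂(1/2, 3) + 10⁻³ between the sieve
integrals, with ρ₁ = 1/2, ρ₂ = 3/7, σ = 3. -/
theorem stmt_13 :
    (1 / (2 * Real.sqrt (3/7))) * (∫ t in (1:ℝ)..(9/7), 1 / Real.sqrt (t * (t - 1)))
      > (1 / (2 * (1/2 : ℝ))) *
          (∫ t in (2:ℝ)..3, Real.log (t - 1) / (t * Real.sqrt (1 - t/3)))
        + 10 ^ (-3 : ℤ) := by
  have hI₁ := two_mul_sqrt_div_le_integral (b := 9 / 7) (by norm_num)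
  have hI₂ := integral_log_sub_one_div_two_three_le
  have hsqrt : 0.4714 ≤ √((9 / 7 - 1) / (9 / 7) : ℝ) := le_sqrt_of_sq_le (by norm_num)
  have hpre : 0.7637 ≤ 1 / (2 * √(3 / 7 : ℝ)) := by
    rw [le_div_iff₀ (by positivity)]
    linarith [(sqrt_le_iff.2 ⟨by norm_num, by norm_num⟩ : √(3 / 7 : ℝ) ≤ 0.65466)]
  rw [gt_iff_lt]
  calc (1 / (2 * (1 / 2 : ℝ))) * (∫ t in (2:ℝ)..3, log (t - 1) / (t * √(1 - t / 3)))
        + 10 ^ (-3 : ℤ) < 0.7637 * (2 * 0.4714) := by norm_num; linarith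
    _ ≤ _ := mul_le_mul hpre (by linarith) (by norm_num) (by positivity)
end

section
/- Let N ≥ 1 and let f₁, f₂ : ℤ/Nℤ → ℝ≥0. Suppose that g₂ : ℤ/Nℤ → ℝ≥0 satisfies f₁ * g₂(n) ≥ δ² for all n in a subset T of ℤ_N, where * denotes the normalized convolution f*g(n) = (1/N)Σ_k f(k)g(n-k). Let h₂ = f₂ - g₂. If additionally f₁ * f₂(n) < δ²/3 for all n ∈ T, then (1/N) Σ_{n ∈ ℤ_N} |f₁ * h₂(n)|² ≥ (δ⁴/10) · |T|/N. -/
/-- Normalized convolution on ℤ/Nℤ: `(f * g)(n) = (1/N) ∑ₖ f(k) g(n - k)`. -/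
noncomputable def convZ (N : ℕ) [NeZero N] (f g : ZMod N → ℝ) (n : ZMod N) : ℝ :=
  (1 / (N : ℝ)) * ∑ k : ZMod N, f k * g (n - k)

theorem stmt_15 (N : ℕ) [NeZero N] (f₁ f₂ g₂ : ZMod N → ℝ)
    (hf₁ : ∀ n, 0 ≤ f₁ n) (hf₂ : ∀ n, 0 ≤ f₂ n) (hg₂ : ∀ n, 0 ≤ g₂ n)
    (δ : ℝ) (hδ : 0 < δ) (T : Finset (ZMod N))
    (hlow : ∀ n ∈ T, δ^2 ≤ convZ N f₁ g₂ n)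
    (hup : ∀ n ∈ T, convZ N f₁ f₂ n < δ^2/3) :
    (δ^4/10) * (T.card : ℝ) / N ≤
      (1 / (N : ℝ)) * ∑ n : ZMod N, (convZ N f₁ (fun m => f₂ m - g₂ m) n)^2 := by
  have hN : (0:ℝ) < N := by
    exact_mod_cast Nat.pos_of_ne_zero (NeZero.ne N)
  have hlin : ∀ n, convZ N f₁ (fun m => f₂ m - g₂ m) n
      = convZ N f₁ f₂ n - convZ N f₁ g₂ n := by
    intro n
    unfold convZ
    rw [← mul_sub, ← Finset.sum_sub_distrib]
    congr 1
    apply Finset.sum_congr rfl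
    intro k _
    ring
  have key : ∀ n ∈ T, δ^4/10 ≤ (convZ N f₁ (fun m => f₂ m - g₂ m) n)^2 := by
    intro n hn
    rw [hlin]
    have h1 := hlow n hn
    have h2 := hup n hn
    nlinarith [sq_nonneg δ, sq_nonneg (δ^2)]
  have hsum : (δ^4/10) * (T.card : ℝ) ≤
      ∑ n : ZMod N, (convZ N f₁ (fun m => f₂ m - g₂ m) n)^2 := by
    calc (δ^4/10) * (T.card : ℝ) = ∑ _n ∈ T, δ^4/10 := by
          rw [Finset.sum_const, nsmul_eq_mul]; ring
      _ ≤ ∑ n ∈ T, (convZ N f₁ (fun m => f₂ m - g₂ m) n)^2 :=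
          Finset.sum_le_sum key
      _ ≤ ∑ n : ZMod N, (convZ N f₁ (fun m => f₂ m - g₂ m) n)^2 :=
          Finset.sum_le_sum_of_subset_of_nonneg (Finset.subset_univ T)
            (fun i _ _ => sq_nonneg _)
  have h := mul_le_mul_of_nonneg_left hsum (show (0:ℝ) ≤ 1/N by positivity)
  calc (δ^4/10) * (T.card : ℝ) / N = 1/(N:ℝ) * ((δ^4/10) * (T.card : ℝ)) := by ring
    _ ≤ _ := h
end
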